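/- Let U be a finite index set of unlabelled points x_u ∈ ℝ^P (u ∈ U), let C_1, …, C_K be finite disjoint sets of labelled points in ℝ^P (the K true classes), and fix 1 ≤ q < P. For a cluster assignment κ : U → {1, …, K}, a permutation π of {1, …, K}, and P×q matrices V_1, …, V_K with orthonormal columns, define the constrained objective g(κ, π, (V_k)) = ∑_{u ∈ U} ‖x_u − V_{κ(u)} V_{κ(u)}ᵀ x_u‖²₂ + ∑_{l=1}^K ∑_{x ∈ C_l} ‖x − V_{π(l)} V_{π(l)}ᵀ x‖²₂. Perform one iteration of KSC with Constraints: (stage 1) for each k ∈ {1, …, K}, let V'_k be a P×q matrix whose columns are orthonormal eigenvectors, corresponding to the q largest eigenvalues, of the scatter matrix ∑ x xᵀ over the points x currently in cluster k, i.e., over {x_u : κ(u) = k} ∪ ⋃_{l : π(l) = k} C_l; (stage 2) define κ'(u) to be a minimizer over k of ‖x_u − V'_k (V'_k)ᵀ x_u‖²₂; (stage 3) define π' to be a minimizer over permutations σ of {1, …, K} of ∑_{l=1}^K ∑_{x ∈ C_l} ‖x − V'_{σ(l)} (V'_{σ(l)})ᵀ x‖²₂. Then g(κ', π', (V'_k))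 ≤ g(κ, π, (V_k)); that is, the KSCC iteration decreases the constrained objective monotonically. -/

import Mathlib

open Matrix Finset

/-- The squared-Euclidean reconstruction error of a point `z ∈ ℝ^P` with
respect to the subspace spanned by the columns of `V`. -/
noncomputable def reconErr {P q : ℕ} (V : Matrix (Fin P) (Fin q) ℝ)
    (z : Fin P → ℝ) : ℝ :=
  ∑ p, (z p - (V * Vᵀ).mulVec z p) ^ 2

lemma reconErr_nonneg {P q : ℕ} (V : Matrix (Fin P) (Fin q) ℝ) (z : Fin P → ℝ) :
    0 ≤ reconErr V z :=
  Finset.sum_nonneg fun _ _ => sq_nonneg _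

lemma reconErr_eq {P q : ℕ} (V : Matrix (Fin P) (Fin q) ℝ) (hV : Vᵀ * V = 1)
    (z : Fin P → ℝ) :
    reconErr V z = (∑ p, (z p)^2) - ∑ j, ((fun p => V p j) ⬝ᵥ z)^2 := by
  have hproj : (V * Vᵀ) * (V * Vᵀ) = V * Vᵀ := by
    rw [Matrix.mul_assoc V Vᵀ (V * Vᵀ), ← Matrix.mul_assoc Vᵀ V Vᵀ, hV, Matrix.one_mul]
  set Pz := (V * Vᵀ) *ᵥ z with hPz
  have hsym : (V * Vᵀ)ᵀ = V * Vᵀ := by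
    rw [Matrix.transpose_mul, Matrix.transpose_transpose]
  have h1 : Pz ᵥ* (V * Vᵀ) = Pz := by
    rw [← hsym, Matrix.vecMul_transpose, hPz, Matrix.mulVec_mulVec, hproj]
  have key1 : Pz ⬝ᵥ Pz = z ⬝ᵥ Pz := by
    calc Pz ⬝ᵥ Pz = Pz ⬝ᵥ ((V * Vᵀ) *ᵥ z) := by rw [← hPz]
      _ = (Pz ᵥ* (V * Vᵀ)) ⬝ᵥ z := Matrix.dotProduct_mulVec _ _ _
      _ = Pz ⬝ᵥ z := by rw [h1]
      _ = z ⬝ᵥ Pz := dotProduct_comm _ _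
  have key2 : z ⬝ᵥ Pz = ∑ j, ((fun p => V p j) ⬝ᵥ z)^2 := by
    rw [hPz, ← Matrix.mulVec_mulVec, Matrix.dotProduct_mulVec]
    have h2 : z ᵥ* V = fun j => (fun p => V p j) ⬝ᵥ z := by
      funext j
      simp [Matrix.vecMul, dotProduct, mul_comm]
    rw [h2]
    simp [dotProduct, Matrix.mulVec, Matrix.transpose_apply, sq]
  have expand : reconErr V z = z ⬝ᵥ z - 2 * (z ⬝ᵥ Pz) + Pz ⬝ᵥ Pz := by
    unfold reconErr
    rw [← hPz]
    have hterm : ∀ p : Fin P, (z p - Pz p)^2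
        = z p * z p - 2*(z p * Pz p) + Pz p * Pz p := fun p => by ring
    simp only [hterm]
    rw [Finset.sum_add_distrib, Finset.sum_sub_distrib, ← Finset.mul_sum]
    simp [dotProduct]
  rw [expand, key1, key2]
  have hz : z ⬝ᵥ z = ∑ p, (z p)^2 := by simp [dotProduct, sq]
  rw [hz]; ring

lemma dot_vecMulVec {P : ℕ} (a v : Fin P → ℝ) :
    v ⬝ᵥ (vecMulVec a a) *ᵥ v = (v ⬝ᵥ a)^2 := by
  have : (vecMulVec a a) *ᵥ v = (a ⬝ᵥ v) • a := by
    funext i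
    simp only [Matrix.mulVec, vecMulVec_apply, dotProduct, Pi.smul_apply,
      smul_eq_mul, Finset.sum_mul]
    exact Finset.sum_congr rfl fun x _ => by ring
  rw [this, dotProduct_smul, smul_eq_mul, dotProduct_comm a v, sq]

lemma dot_sum_mulVec {P : ℕ} {α : Type*} (s : Finset α)
    (A : α → Matrix (Fin P) (Fin P) ℝ) (v : Fin P → ℝ) :
    v ⬝ᵥ (∑ a ∈ s, A a) *ᵥ v = ∑ a ∈ s, v ⬝ᵥ (A a) *ᵥ v := by
  classical
  induction s using Finset.induction with
  | empty => simp
  | insert _ _ h ih =>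
    rw [Finset.sum_insert h, Finset.sum_insert h, Matrix.add_mulVec,
      dotProduct_add, ih]

lemma dot_sum {P : ℕ} {α : Type*} (s : Finset α) (v : Fin P → ℝ) (f : α → Fin P → ℝ) :
    v ⬝ᵥ (∑ a ∈ s, f a) = ∑ a ∈ s, v ⬝ᵥ f a := by
  simp only [dotProduct, Finset.sum_apply, Finset.mul_sum]
  exact Finset.sum_comm

lemma kyfan {P q : ℕ} (hq : 0 < q) (hqP : q < P) (M : Matrix (Fin P) (Fin P) ℝ)
    (mu : Fin P → ℝ) (hmu : Antitone mu)
    (w : Fin P → Fin P → ℝ)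
    (hortho : ∀ j j', w j ⬝ᵥ w j' = if j = j' then (1:ℝ) else 0)
    (heig : ∀ j, M *ᵥ (w j) = mu j • w j)
    (V : Matrix (Fin P) (Fin q) ℝ) (hV : Vᵀ * V = 1) :
    ∑ i : Fin q, (fun p => V p i) ⬝ᵥ M *ᵥ (fun p => V p i)
      ≤ ∑ i : Fin q, mu (Fin.castLE hqP.le i) := by
  -- completeness of the eigenbasis
  set W : Matrix (Fin P) (Fin P) ℝ := Matrix.of w with hW
  have hWWt : W * Wᵀ = 1 := by
    ext j j'
    simpa [hW, Matrix.mul_apply, Matrix.one_apply, dotProduct] using hortho j j'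
  have hWtW : Wᵀ * W = 1 := mul_eq_one_comm.mp hWWt
  have hdelta : ∀ p p', ∑ j, w j p * w j p' = if p = p' then (1:ℝ) else 0 := by
    intro p p'
    have := congrFun (congrFun hWtW p) p'
    simpa [hW, Matrix.mul_apply, Matrix.one_apply] using this
  have hcomplete : ∀ (v : Fin P → ℝ) (p : Fin P),
      ∑ j, (w j ⬝ᵥ v) * w j p = v p := by
    intro v p
    calc ∑ j, (w j ⬝ᵥ v) * w j p
        = ∑ j, ∑ p', (w j p * w j p') * v p' := by
          refine Finset.sum_congr rfl fun j _ => ?_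
          simp only [dotProduct, Finset.sum_mul]
          exact Finset.sum_congr rfl fun p' _ => by ring
      _ = ∑ p', (∑ j, w j p * w j p') * v p' := by
          rw [Finset.sum_comm]
          exact Finset.sum_congr rfl fun p' _ => (Finset.sum_mul _ _ _).symm
      _ = v p := by simp [hdelta]
  have hparseval : ∀ v : Fin P → ℝ, ∑ j, (w j ⬝ᵥ v)^2 = v ⬝ᵥ v := by
    intro v
    calc ∑ j, (w j ⬝ᵥ v)^2 = ∑ j, (w j ⬝ᵥ v) * (w j ⬝ᵥ v) := by
          exact Finset.sum_congr rfl fun j _ => sq (w j ⬝ᵥ v) ▸ by ring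
      _ = ∑ j, ∑ p, ((w j ⬝ᵥ v) * w j p) * v p := by
          refine Finset.sum_congr rfl fun j _ => ?_
          simp only [dotProduct, Finset.mul_sum]
          exact Finset.sum_congr rfl fun p _ => by ring
      _ = ∑ p, (∑ j, (w j ⬝ᵥ v) * w j p) * v p := by
          rw [Finset.sum_comm]
          exact Finset.sum_congr rfl fun p _ => (Finset.sum_mul _ _ _).symm
      _ = ∑ p, v p * v p := Finset.sum_congr rfl fun p _ => by rw [hcomplete v p]
      _ = v ⬝ᵥ v := by simp [dotProduct]
  have hquad : ∀ v : Fin P → ℝ, v ⬝ᵥ M *ᵥ v = ∑ j, mu j * (w j ⬝ᵥ v)^2 := by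
    intro v
    have hv : v = ∑ j, (w j ⬝ᵥ v) • w j := by
      funext p
      simp only [Finset.sum_apply, Pi.smul_apply, smul_eq_mul]
      exact (hcomplete v p).symm
    have hMv : M *ᵥ v = ∑ j, (w j ⬝ᵥ v) • (mu j • w j) := by
      conv_lhs => rw [hv]
      rw [show M *ᵥ (∑ j, (w j ⬝ᵥ v) • w j)
          = M.mulVecLin (∑ j, (w j ⬝ᵥ v) • w j) from rfl, map_sum]
      simp [Matrix.mulVecLin_apply, heig]
    rw [hMv, dot_sum]
    refine Finset.sum_congr rfl fun j _ => ?_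
    rw [dotProduct_smul, dotProduct_smul, smul_eq_mul, smul_eq_mul,
      dotProduct_comm v (w j)]
    ring
  -- column facts
  have hcol : ∀ i i' : Fin q,
      (fun p => V p i) ⬝ᵥ (fun p => V p i') = if i = i' then (1:ℝ) else 0 := by
    intro i i'
    have := congrFun (congrFun hV i) i'
    simpa [Matrix.mul_apply, Matrix.one_apply, dotProduct] using this
  have hbessel : ∀ u : Fin P → ℝ,
      ∑ i : Fin q, ((fun p => V p i) ⬝ᵥ u)^2 ≤ u ⬝ᵥ u := by
    intro u
    have h0 := reconErr_nonneg V u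
    rw [reconErr_eq V hV u] at h0
    have : u ⬝ᵥ u = ∑ p, (u p)^2 := by simp [dotProduct, sq]
    linarith
  set a : Fin P → ℝ := fun j => ∑ i : Fin q, (w j ⬝ᵥ (fun p => V p i))^2 with ha
  have haj0 : ∀ j, 0 ≤ a j := fun j => Finset.sum_nonneg fun _ _ => sq_nonneg _
  have haj1 : ∀ j, a j ≤ 1 := by
    intro j
    have h1 := hbessel (w j)
    rw [hortho j j] at h1
    simp only [if_pos rfl] at h1
    calc a j = ∑ i : Fin q, ((fun p => V p i) ⬝ᵥ w j)^2 := by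
          refine Finset.sum_congr rfl fun i _ => ?_
          rw [dotProduct_comm]
      _ ≤ 1 := h1
  have hsuma : ∑ j, a j = (q : ℝ) := by
    rw [ha]
    rw [Finset.sum_comm]
    have : ∀ i : Fin q, ∑ j, (w j ⬝ᵥ (fun p => V p i))^2 = 1 := by
      intro i
      rw [hparseval, hcol i i, if_pos rfl]
    simp [this]
  have hLHS : ∑ i : Fin q, (fun p => V p i) ⬝ᵥ M *ᵥ (fun p => V p i)
      = ∑ j, mu j * a j := by
    rw [Finset.sum_congr rfl fun i _ => hquad (fun p => V p i), Finset.sum_comm]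
    exact Finset.sum_congr rfl fun j _ => (Finset.mul_sum _ _ _).symm
  rw [hLHS]
  set t : ℝ := mu ⟨q, hqP⟩ with ht
  have hsplit : ∑ j, mu j * a j = t * (∑ j, a j) + ∑ j, (mu j - t) * a j := by
    rw [Finset.mul_sum, ← Finset.sum_add_distrib]
    exact Finset.sum_congr rfl fun j _ => by ring
  have hS : ∑ j ∈ Finset.univ.filter (fun j : Fin P => (j : ℕ) < q), (mu j - t)
      = ∑ i : Fin q, (mu (Fin.castLE hqP.le i) - t) := by
    refine Finset.sum_nbij' (fun j => (⟨(j : ℕ) % q, Nat.mod_lt _ hq⟩ : Fin q))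
      (fun i => Fin.castLE hqP.le i) ?_ ?_ ?_ ?_ ?_
    · intro a _; exact Finset.mem_univ _
    · intro i _
      simp only [Finset.mem_filter, Finset.mem_univ, true_and]
      simpa using i.2
    · intro a ha
      simp only [Finset.mem_filter, Finset.mem_univ, true_and] at ha
      ext
      simp [Fin.castLE, Nat.mod_eq_of_lt ha]
    · intro i _
      ext
      simp [Fin.castLE, Nat.mod_eq_of_lt i.2]
    · intro a ha
      simp only [Finset.mem_filter, Finset.mem_univ, true_and] at ha
      have hca : Fin.castLE hqP.le (⟨(a : ℕ) % q, Nat.mod_lt _ hq⟩ : Fin q) = a := by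
        ext
        simp [Fin.castLE, Nat.mod_eq_of_lt ha]
      rw [hca]
  have hbound : ∑ j, (mu j - t) * a j ≤ ∑ i : Fin q, (mu (Fin.castLE hqP.le i) - t) := by
    rw [← hS, ← Finset.sum_filter_add_sum_filter_not Finset.univ
      (fun j : Fin P => (j : ℕ) < q) (fun j => (mu j - t) * a j)]
    have h1 : ∑ j ∈ Finset.univ.filter (fun j : Fin P => (j : ℕ) < q), (mu j - t) * a j
        ≤ ∑ j ∈ Finset.univ.filter (fun j : Fin P => (j : ℕ) < q), (mu j - t) := by
      refine Finset.sum_le_sum fun j hj => ?_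
      simp only [Finset.mem_filter, Finset.mem_univ, true_and] at hj
      have hle : t ≤ mu j := hmu (show j ≤ (⟨q, hqP⟩ : Fin P) by
        rw [Fin.le_def]; exact hj.le)
      calc (mu j - t) * a j ≤ (mu j - t) * 1 :=
            mul_le_mul_of_nonneg_left (haj1 j) (sub_nonneg.mpr hle)
        _ = mu j - t := mul_one _
    have h2 : ∑ j ∈ Finset.univ.filter (fun j : Fin P => ¬ (j : ℕ) < q), (mu j - t) * a j ≤ 0 := by
      refine Finset.sum_nonpos fun j hj => ?_
      simp only [Finset.mem_filter, Finset.mem_univ, true_and, not_lt] at hj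
      have hle : mu j ≤ t := hmu (show (⟨q, hqP⟩ : Fin P) ≤ j by
        rw [Fin.le_def]; exact hj)
      exact mul_nonpos_of_nonpos_of_nonneg (sub_nonpos.mpr hle) (haj0 j)
    linarith
  have hcard : ∑ _i : Fin q, t = (q : ℝ) * t := by
    simp [Finset.sum_const, mul_comm]
  calc ∑ j, mu j * a j = t * (∑ j, a j) + ∑ j, (mu j - t) * a j := hsplit
    _ ≤ t * (q : ℝ) + ∑ i : Fin q, (mu (Fin.castLE hqP.le i) - t) := by
        rw [hsuma]; linarith [hbound]
    _ = ∑ i : Fin q, mu (Fin.castLE hqP.le i) := by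
        rw [Finset.sum_sub_distrib, hcard]; ring

/-- Theorem 1 (KSCC monotonicity): one three-stage iteration of K-Subspace
Clustering with Constraints — (1) refit each subspace basis as the top-`q`
eigenvectors of the scatter matrix of the points currently in that cluster
(unlabelled points assigned to it plus the labelled classes matched to it),
(2) reassign each unlabelled point to its closest subspace, (3) rematch the
classes to cluster labels by a permutation minimizing the labelled
reconstruction error — does not increase the constrained objective `g`. -/
theorem kscc_iteration_monotone
    {N P K q : ℕ} (hK : 1 ≤ K) (hq1 : 1 ≤ q) (hqP : q < P)
    (x : Fin N → Fin P → ℝ)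
    (C : Fin K → Finset (Fin P → ℝ))
    (hdisj : ∀ l l', l ≠ l' → Disjoint (C l) (C l'))
    (kappa : Fin N → Fin K) (pi : Equiv.Perm (Fin K))
    (V : Fin K → Matrix (Fin P) (Fin q) ℝ)
    (hV : ∀ k, (V k)ᵀ * V k = 1)
    -- Stage 1: subspace estimation from the current clusters
    (M : Fin K → Matrix (Fin P) (Fin P) ℝ)
    (hM : ∀ k, M k =
      (∑ u ∈ Finset.univ.filter (fun u => kappa u = k), vecMulVec (x u) (x u))
      + ∑ l ∈ Finset.univ.filter (fun l => pi l = k), ∑ z ∈ C l, vecMulVec z z)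
    (mu : Fin K → Fin P → ℝ) (hmu : ∀ k, Antitone (mu k))
    (w : Fin K → Fin P → Fin P → ℝ)
    (hortho : ∀ k j j', w k j ⬝ᵥ w k j' = if j = j' then (1 : ℝ) else 0)
    (heig : ∀ k j, (M k).mulVec (w k j) = mu k j • w k j)
    (V' : Fin K → Matrix (Fin P) (Fin q) ℝ)
    (hV' : ∀ k p j, V' k p j = w k (Fin.castLE hqP.le j) p)
    -- Stage 2: reassignment of the unlabelled points
    (kappa' : Fin N → Fin K)
    (hkappa' : ∀ u k, reconErr (V' (kappa' u)) (x u) ≤ reconErr (V' k) (x u))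
    -- Stage 3: rematching classes to cluster labels
    (pi' : Equiv.Perm (Fin K))
    (hpi' : ∀ sigma : Equiv.Perm (Fin K),
      ∑ l, ∑ z ∈ C l, reconErr (V' (pi' l)) z ≤
        ∑ l, ∑ z ∈ C l, reconErr (V' (sigma l)) z) :
    (∑ u, reconErr (V' (kappa' u)) (x u)) + ∑ l, ∑ z ∈ C l, reconErr (V' (pi' l)) z
      ≤ (∑ u, reconErr (V (kappa u)) (x u)) + ∑ l, ∑ z ∈ C l, reconErr (V (pi l)) z := by
  classical
  -- orthonormality of the new bases
  have hV'orth : ∀ k, (V' k)ᵀ * V' k = 1 := by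
    intro k
    ext j j'
    have h1 : ((V' k)ᵀ * V' k) j j' = w k (Fin.castLE hqP.le j) ⬝ᵥ w k (Fin.castLE hqP.le j') := by
      simp [Matrix.mul_apply, Matrix.transpose_apply, dotProduct, hV']
    rw [h1, hortho]
    by_cases h : j = j'
    · simp [h, Matrix.one_apply]
    · have : Fin.castLE hqP.le j ≠ Fin.castLE hqP.le j' := by
        intro hc; exact h ((Fin.castLE_injective hqP.le) hc)
      simp [h, this, Matrix.one_apply]
  -- Stage 2 & 3 give the first inequality
  have stepA : (∑ u, reconErr (V' (kappa' u)) (x u)) + ∑ l, ∑ z ∈ C l, reconErr (V' (pi' l)) z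
      ≤ (∑ u, reconErr (V' (kappa u)) (x u)) + ∑ l, ∑ z ∈ C l, reconErr (V' (pi l)) z :=
    add_le_add (Finset.sum_le_sum fun u _ => hkappa' u (kappa u)) (hpi' pi)
  -- rewrite the objective fiberwise over clusters
  have fib : ∀ (W : Fin K → Matrix (Fin P) (Fin q) ℝ),
      (∑ u, reconErr (W (kappa u)) (x u)) + ∑ l, ∑ z ∈ C l, reconErr (W (pi l)) z
      = ∑ k, ((∑ u ∈ Finset.univ.filter (fun u => kappa u = k), reconErr (W k) (x u))
          + ∑ l ∈ Finset.univ.filter (fun l => pi l = k), ∑ z ∈ C l, reconErr (W k) z) := by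
    intro W
    rw [Finset.sum_add_distrib]
    congr 1
    · rw [← Finset.sum_fiberwise Finset.univ kappa (fun u => reconErr (W (kappa u)) (x u))]
      refine Finset.sum_congr rfl fun k _ => Finset.sum_congr rfl fun u hu => ?_
      simp only [Finset.mem_filter] at hu
      rw [hu.2]
    · rw [← Finset.sum_fiberwise Finset.univ (fun l => pi l)
        (fun l => ∑ z ∈ C l, reconErr (W (pi l)) z)]
      refine Finset.sum_congr rfl fun k _ => Finset.sum_congr rfl fun l hl => ?_
      simp only [Finset.mem_filter] at hl
      rw [hl.2]
  -- quadratic form of the scatter matrix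
  have hQ : ∀ k (v : Fin P → ℝ), v ⬝ᵥ (M k) *ᵥ v
      = (∑ u ∈ Finset.univ.filter (fun u => kappa u = k), (v ⬝ᵥ x u)^2)
        + ∑ l ∈ Finset.univ.filter (fun l => pi l = k), ∑ z ∈ C l, (v ⬝ᵥ z)^2 := by
    intro k v
    rw [hM k, Matrix.add_mulVec, dotProduct_add]
    congr 1
    · rw [dot_sum_mulVec]
      exact Finset.sum_congr rfl fun u _ => dot_vecMulVec _ _
    · rw [dot_sum_mulVec]
      refine Finset.sum_congr rfl fun l _ => ?_
      rw [dot_sum_mulVec]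
      exact Finset.sum_congr rfl fun z _ => dot_vecMulVec _ _
  -- per-cluster error expression for an orthonormal basis
  have hclus : ∀ k (W : Matrix (Fin P) (Fin q) ℝ), Wᵀ * W = 1 →
      (∑ u ∈ Finset.univ.filter (fun u => kappa u = k), reconErr W (x u))
        + ∑ l ∈ Finset.univ.filter (fun l => pi l = k), ∑ z ∈ C l, reconErr W z
      = ((∑ u ∈ Finset.univ.filter (fun u => kappa u = k), ∑ p, (x u p)^2)
          + ∑ l ∈ Finset.univ.filter (fun l => pi l = k), ∑ z ∈ C l, ∑ p, (z p)^2)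
        - ∑ i : Fin q, (fun p => W p i) ⬝ᵥ (M k) *ᵥ (fun p => W p i) := by
    intro k W hW
    have e1 : ∀ u, reconErr W (x u) = (∑ p, (x u p)^2) - ∑ i, ((fun p => W p i) ⬝ᵥ x u)^2 :=
      fun u => reconErr_eq W hW (x u)
    have e2 : ∀ z : Fin P → ℝ, reconErr W z = (∑ p, (z p)^2) - ∑ i, ((fun p => W p i) ⬝ᵥ z)^2 :=
      fun z => reconErr_eq W hW z
    simp only [e1, e2, Finset.sum_sub_distrib]
    have e3 : ∑ i : Fin q, (fun p => W p i) ⬝ᵥ (M k) *ᵥ (fun p => W p i)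
        = (∑ u ∈ Finset.univ.filter (fun u => kappa u = k), ∑ i, ((fun p => W p i) ⬝ᵥ x u)^2)
          + ∑ l ∈ Finset.univ.filter (fun l => pi l = k), ∑ z ∈ C l, ∑ i, ((fun p => W p i) ⬝ᵥ z)^2 := by
      rw [Finset.sum_congr rfl fun i _ => hQ k (fun p => W p i), Finset.sum_add_distrib]
      congr 1
      · exact Finset.sum_comm
      · rw [Finset.sum_comm]
        exact Finset.sum_congr rfl fun l _ => Finset.sum_comm
    rw [e3]
    ring
  -- the per-cluster value of the new basis equals the top eigenvalue sum
  have hQV' : ∀ k, ∑ i : Fin q, (fun p => V' k p i) ⬝ᵥ (M k) *ᵥ (fun p => V' k p i)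
      = ∑ i : Fin q, mu k (Fin.castLE hqP.le i) := by
    intro k
    refine Finset.sum_congr rfl fun i _ => ?_
    have hcol : (fun p => V' k p i) = w k (Fin.castLE hqP.le i) := by
      funext p; exact hV' k p i
    rw [hcol, heig k, dotProduct_smul, smul_eq_mul, hortho, if_pos rfl, mul_one]
  -- Stage 1 gives the per-cluster inequality
  have stepB : ∀ k,
      (∑ u ∈ Finset.univ.filter (fun u => kappa u = k), reconErr (V' k) (x u))
        + ∑ l ∈ Finset.univ.filter (fun l => pi l = k), ∑ z ∈ C l, reconErr (V' k) z
      ≤ (∑ u ∈ Finset.univ.filter (fun u => kappa u = k), reconErr (V k) (x u))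
        + ∑ l ∈ Finset.univ.filter (fun l => pi l = k), ∑ z ∈ C l, reconErr (V k) z := by
    intro k
    rw [hclus k (V' k) (hV'orth k), hclus k (V k) (hV k)]
    have hky := kyfan hq1 hqP (M k) (mu k) (hmu k) (w k) (hortho k) (heig k) (V k) (hV k)
    rw [hQV' k]
    linarith
  calc (∑ u, reconErr (V' (kappa' u)) (x u)) + ∑ l, ∑ z ∈ C l, reconErr (V' (pi' l)) z
      ≤ (∑ u, reconErr (V' (kappa u)) (x u)) + ∑ l, ∑ z ∈ C l, reconErr (V' (pi l)) z := stepA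
    _ = ∑ k, ((∑ u ∈ Finset.univ.filter (fun u => kappa u = k), reconErr (V' k) (x u))
          + ∑ l ∈ Finset.univ.filter (fun l => pi l = k), ∑ z ∈ C l, reconErr (V' k) z) := fib V'
    _ ≤ ∑ k, ((∑ u ∈ Finset.univ.filter (fun u => kappa u = k), reconErr (V k) (x u))
          + ∑ l ∈ Finset.univ.filter (fun l => pi l = k), ∑ z ∈ C l, reconErr (V k) z) :=
        Finset.sum_le_sum fun k _ => stepB k
    _ = (∑ u, reconErr (V (kappa u)) (x u)) + ∑ l, ∑ z ∈ C l, reconErr (V (pi l)) z := (fib V).symm
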